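/- There is no term M of LFPL+ with ⊢ M : ◆ under the empty context that evaluates under the empty environment to a value. -/
import Mathlib


/-! # LFPL⁺: syntax, values, and big-step operational cost semantics -/

/-- LFPL⁺ types: diamond, unit, sums, tensor products, linear functions,
lists, lazy products, stacks, and binary trees. -/
inductive Tp : Type
  | dia : Tp
  | unit : Tp
  | sum (A B : Tp) : Tp
  | tens (A B : Tp) : Tp
  | arr (A B : Tp) : Tp
  | list (A : Tp) : Tp
  | prod (A B : Tp) : Tp
  | stack (A : Tp) : Tp
  | tree (A : Tp) : Tp

/-- Typing contexts: a list of declarations; `none` marks an unusable slot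
(used for context splitting in the affine type system). -/
abbrev Ctx := List (Option Tp)

/-- De Bruijn variable lookup. -/
inductive Lk : Ctx → Tp → Type
  | here {A : Tp} {G : Ctx} : Lk (some A :: G) A
  | there {o : Option Tp} {A : Tp} {G : Ctx} : Lk G A → Lk (o :: G) A

/-- Splitting a context into two halves (each declared variable is usable in
exactly one half): this enforces the affine discipline. -/
inductive Split : Ctx → Ctx → Ctx → Type
  | nil : Split [] [] []
  | skip {G G1 G2} : Split G G1 G2 → Split (none :: G) (none :: G1) (none :: G2)
  | left {A : Tp} {G G1 G2} : Split G G1 G2 → Split (some A :: G) (some A :: G1) (none :: G2)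
  | right {A : Tp} {G G1 G2} : Split G G1 G2 → Split (some A :: G) (none :: G1) (some A :: G2)

/-- Intrinsically typed LFPL⁺ terms: `Term G A` are the terms `M` with
`G ⊢ M : A`.  The `cons` and `node` constructors take an extra argument of
type `◆`; the step case of the list recursor is typed in a context containing
only the diamond, head, and recursive-result variables; the base case of the
tree recursor is typed in the empty context. -/
inductive Term : Ctx → Tp → Type
  | var {G A} : Lk G A → Term G A
  | null {G} : Term G .unit
  | inj1 {G A B} : Term G A → Term G (.sum A B)
  | inj2 {G A B} : Term G B → Term G (.sum A B)
  | scase {G G1 G2 A B C} : Split G G1 G2 → Term G1 (.sum A B) →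
      Term (some A :: G2) C → Term (some B :: G2) C → Term G C
  | pair {G G1 G2 A B} : Split G G1 G2 → Term G1 A → Term G2 B → Term G (.tens A B)
  | letp {G G1 G2 A B C} : Split G G1 G2 → Term G1 (.tens A B) →
      Term (some B :: some A :: G2) C → Term G C
  | lam {G A B} : Term (some A :: G) B → Term G (.arr A B)
  | app {G G1 G2 A B} : Split G G1 G2 → Term G1 (.arr A B) → Term G2 A → Term G B
  | nil {G A} : Term G (.list A)
  | cons {G G1 G23 G2 G3 A} : Split G G1 G23 → Split G23 G2 G3 →
      Term G1 .dia → Term G2 A → Term G3 (.list A) → Term G (.list A)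
  | lrec {G G1 G2 A B} : Split G G1 G2 → Term G1 (.list A) → Term G2 B →
      Term [some B, some A, some .dia] B → Term G B
  | record {G A B} : Term G A → Term G B → Term G (.prod A B)
  | proj1 {G A B} : Term G (.prod A B) → Term G A
  | proj2 {G A B} : Term G (.prod A B) → Term G B
  | empty {G A} : Term G (.stack A)
  | push {G G1 G2 A} : Split G G1 G2 → Term G1 A → Term G2 (.stack A) → Term G (.stack A)
  | pop {G G1 G2 A B} : Split G G1 G2 → Term G1 (.stack A) → Term G2 B →
      Term (some (.stack A) :: some A :: G2) B → Term G B
  | leaf {G A} : Term G (.tree A)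
  | node {G G1 G234 G2 G34 G3 G4 A} : Split G G1 G234 → Split G234 G2 G34 →
      Split G34 G3 G4 → Term G1 .dia → Term G2 A → Term G3 (.tree A) →
      Term G4 (.tree A) → Term G (.tree A)
  | trec {G A B} : Term G (.tree A) → Term ([] : Ctx) B →
      Term [some B, some B, some A, some .dia] B → Term G B

mutual
  /-- LFPL⁺ values (intrinsically typed), defined mutually with environments.
  Function and lazy-pair closures capture an environment; list and tree values
  store no diamond component. -/
  inductive Value : Tp → Type
    | dia : Value .dia
    | null : Value .unit
    | record {G A B} : Env G → Term G A → Term G B → Value (.prod A B)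
    | inj1 {A B} : Value A → Value (.sum A B)
    | inj2 {A B} : Value B → Value (.sum A B)
    | pair {A B} : Value A → Value B → Value (.tens A B)
    | clos {G A B} : Env G → Term (some A :: G) B → Value (.arr A B)
    | sempty {A} : Value (.stack A)
    | spush {A} : Value A → Value (.stack A) → Value (.stack A)
    | nil {A} : Value (.list A)
    | cons {A} : Value A → Value (.list A) → Value (.list A)
    | leaf {A} : Value (.tree A)
    | node {A} : Value A → Value (.tree A) → Value (.tree A) → Value (.tree A)

  /-- Environments: a value for each declared variable of the context. -/
  inductive Env : Ctx → Type
    | nil : Env []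
    | cons {A G} : Value A → Env G → Env (some A :: G)
    | skip {G} : Env G → Env (none :: G)
end

/-- Environment lookup. -/
def Env.lk : {G : Ctx} → {A : Tp} → Env G → Lk G A → Value A
  | _, _, .cons v _, .here => v
  | _, _, .cons _ V, .there l => V.lk l
  | _, _, .skip V, .there l => V.lk l

/-- First half of an environment along a context split. -/
def Env.split1 : {G G1 G2 : Ctx} → Split G G1 G2 → Env G → Env G1
  | _, _, _, .nil, _ => .nil
  | _, _, _, .skip s, .skip V => .skip (V.split1 s)
  | _, _, _, .left s, .cons v V => .cons v (V.split1 s)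
  | _, _, _, .right s, .cons _ V => .skip (V.split1 s)

/-- Second half of an environment along a context split. -/
def Env.split2 : {G G1 G2 : Ctx} → Split G G1 G2 → Env G → Env G2
  | _, _, _, .nil, _ => .nil
  | _, _, _, .skip s, .skip V => .skip (V.split2 s)
  | _, _, _, .left s, .cons _ V => .skip (V.split2 s)
  | _, _, _, .right s, .cons v V => .cons v (V.split2 s)

/-- A generic cost model: one fixed cost constant per syntactic construct. -/
structure CostModel : Type where
  kvar : ℕ
  knull : ℕ
  kinj1 : ℕ
  kinj2 : ℕ
  kcase : ℕ
  kpair : ℕ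
  kletp : ℕ
  klam : ℕ
  kapp : ℕ
  knil : ℕ
  kcons : ℕ
  krec : ℕ
  krecord : ℕ
  kproj1 : ℕ
  kproj2 : ℕ
  kempty : ℕ
  kpush : ℕ
  kpop : ℕ
  kleaf : ℕ
  knode : ℕ
  ktrec : ℕ

mutual
  /-- The big-step operational cost semantics `V ⊢ M ⇓^c v`: term `M`
  evaluates under environment `V` to value `v` with cost `c`.  Each rule adds
  the cost constant of its construct and sums the costs of its premises.  The
  step body of the list recursor is evaluated under an environment containing
  only the diamond value, the head value, and the recursive result; the step
  body of the tree recursor under only the diamond value, the label, and the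
  two recursive results. -/
  inductive Evals (K : CostModel) : {G : Ctx} → {A : Tp} → Env G → Term G A → ℕ → Value A → Prop
    | var {G A} {V : Env G} (l : Lk G A) :
        Evals K V (.var l) K.kvar (V.lk l)
    | null {G} {V : Env G} : Evals K V .null K.knull .null
    | inj1 {G A B} {V : Env G} {M : Term G A} {c v} :
        Evals K V M c v → Evals K V (.inj1 (B := B) M) (c + K.kinj1) (.inj1 v)
    | inj2 {G A B} {V : Env G} {M : Term G B} {c v} :
        Evals K V M c v → Evals K V (.inj2 (A := A) M) (c + K.kinj2) (.inj2 v)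
    | case1 {G G1 G2 A B C} {V : Env G} {s : Split G G1 G2} {M : Term G1 (.sum A B)}
        {N1 : Term (some A :: G2) C} {N2 : Term (some B :: G2) C} {c c' v w} :
        Evals K (V.split1 s) M c (.inj1 v) →
        Evals K (.cons v (V.split2 s)) N1 c' w →
        Evals K V (.scase s M N1 N2) (c + c' + K.kcase) w
    | case2 {G G1 G2 A B C} {V : Env G} {s : Split G G1 G2} {M : Term G1 (.sum A B)}
        {N1 : Term (some A :: G2) C} {N2 : Term (some B :: G2) C} {c c' v w} :
        Evals K (V.split1 s) M c (.inj2 v) →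
        Evals K (.cons v (V.split2 s)) N2 c' w →
        Evals K V (.scase s M N1 N2) (c + c' + K.kcase) w
    | pair {G G1 G2 A B} {V : Env G} {s : Split G G1 G2} {M1 : Term G1 A}
        {M2 : Term G2 B} {c1 c2 v1 v2} :
        Evals K (V.split1 s) M1 c1 v1 → Evals K (V.split2 s) M2 c2 v2 →
        Evals K V (.pair s M1 M2) (c1 + c2 + K.kpair) (.pair v1 v2)
    | letp {G G1 G2 A B C} {V : Env G} {s : Split G G1 G2} {M : Term G1 (.tens A B)}
        {N : Term (some B :: some A :: G2) C} {c c' v1 v2 w} :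
        Evals K (V.split1 s) M c (.pair v1 v2) →
        Evals K (.cons v2 (.cons v1 (V.split2 s))) N c' w →
        Evals K V (.letp s M N) (c + c' + K.kletp) w
    | lam {G A B} {V : Env G} {M : Term (some A :: G) B} :
        Evals K V (.lam M) K.klam (.clos V M)
    | app {G G1 G2 G' A B} {V : Env G} {s : Split G G1 G2} {M : Term G1 (.arr A B)}
        {N : Term G2 A} {W : Env G'} {M' : Term (some A :: G') B} {c1 c2 c3 v w} :
        Evals K (V.split1 s) M c1 (.clos W M') →
        Evals K (V.split2 s) N c2 v →
        Evals K (.cons v W) M' c3 w →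
        Evals K V (.app s M N) (c1 + c2 + c3 + K.kapp) w
    | nil {G A} {V : Env G} : Evals K V (.nil (A := A)) K.knil .nil
    | cons {G G1 G23 G2 G3 A} {V : Env G} {s1 : Split G G1 G23} {s2 : Split G23 G2 G3}
        {Md : Term G1 .dia} {Mh : Term G2 A} {Mt : Term G3 (.list A)} {cd ch ct vh vt} :
        Evals K (V.split1 s1) Md cd .dia →
        Evals K ((V.split2 s1).split1 s2) Mh ch vh →
        Evals K ((V.split2 s1).split2 s2) Mt ct vt →
        Evals K V (.cons s1 s2 Md Mh Mt) (cd + ch + ct + K.kcons) (.cons vh vt)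
    | lrec {G G1 G2 A B} {V : Env G} {s : Split G G1 G2} {M : Term G1 (.list A)}
        {N1 : Term G2 B} {N2 : Term [some B, some A, some .dia] B} {c cr lv w} :
        Evals K (V.split1 s) M c lv →
        EvalsRec K (V.split2 s) N1 N2 lv cr w →
        Evals K V (.lrec s M N1 N2) (c + cr) w
    | record {G A B} {V : Env G} {M1 : Term G A} {M2 : Term G B} :
        Evals K V (.record M1 M2) K.krecord (.record V M1 M2)
    | proj1 {G G' A B} {V : Env G} {M : Term G (.prod A B)} {W : Env G'}
        {M1 : Term G' A} {M2 : Term G' B} {c c' v} :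
        Evals K V M c (.record W M1 M2) → Evals K W M1 c' v →
        Evals K V (.proj1 M) (c + c' + K.kproj1) v
    | proj2 {G G' A B} {V : Env G} {M : Term G (.prod A B)} {W : Env G'}
        {M1 : Term G' A} {M2 : Term G' B} {c c' v} :
        Evals K V M c (.record W M1 M2) → Evals K W M2 c' v →
        Evals K V (.proj2 M) (c + c' + K.kproj2) v
    | empty {G A} {V : Env G} : Evals K V (.empty (A := A)) K.kempty .sempty
    | push {G G1 G2 A} {V : Env G} {s : Split G G1 G2} {Mh : Term G1 A}
        {Mt : Term G2 (.stack A)} {ch ct vh vt} :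
        Evals K (V.split1 s) Mh ch vh → Evals K (V.split2 s) Mt ct vt →
        Evals K V (.push s Mh Mt) (ch + ct + K.kpush) (.spush vh vt)
    | pop1 {G G1 G2 A B} {V : Env G} {s : Split G G1 G2} {M : Term G1 (.stack A)}
        {N1 : Term G2 B} {N2 : Term (some (.stack A) :: some A :: G2) B} {c c' w} :
        Evals K (V.split1 s) M c .sempty →
        Evals K (V.split2 s) N1 c' w →
        Evals K V (.pop s M N1 N2) (c + c' + K.kpop) w
    | pop2 {G G1 G2 A B} {V : Env G} {s : Split G G1 G2} {M : Term G1 (.stack A)}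
        {N1 : Term G2 B} {N2 : Term (some (.stack A) :: some A :: G2) B} {c c' vh vt w} :
        Evals K (V.split1 s) M c (.spush vh vt) →
        Evals K (.cons vt (.cons vh (V.split2 s))) N2 c' w →
        Evals K V (.pop s M N1 N2) (c + c' + K.kpop) w
    | leaf {G A} {V : Env G} : Evals K V (.leaf (A := A)) K.kleaf .leaf
    | node {G G1 G234 G2 G34 G3 G4 A} {V : Env G} {s1 : Split G G1 G234}
        {s2 : Split G234 G2 G34} {s3 : Split G34 G3 G4} {Md : Term G1 .dia}
        {Mx : Term G2 A} {Ml : Term G3 (.tree A)} {Mr : Term G4 (.tree A)}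
        {cd cx cl cr vx vl vr} :
        Evals K (V.split1 s1) Md cd .dia →
        Evals K ((V.split2 s1).split1 s2) Mx cx vx →
        Evals K (((V.split2 s1).split2 s2).split1 s3) Ml cl vl →
        Evals K (((V.split2 s1).split2 s2).split2 s3) Mr cr vr →
        Evals K V (.node s1 s2 s3 Md Mx Ml Mr) (cd + cx + cl + cr + K.knode) (.node vx vl vr)
    | trec {G A B} {V : Env G} {M : Term G (.tree A)} {N1 : Term ([] : Ctx) B}
        {N2 : Term [some B, some B, some A, some .dia] B} {c cr tv w} :
        Evals K V M c tv →
        EvalsTree K N1 N2 tv cr w →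
        Evals K V (.trec M N1 N2) (c + cr) w

  /-- Iteration of the list recursor over a list value. -/
  inductive EvalsRec (K : CostModel) : {G2 : Ctx} → {A B : Tp} → Env G2 → Term G2 B →
      Term [some B, some A, some .dia] B → Value (.list A) → ℕ → Value B → Prop
    | nil {G2 A B} {V : Env G2} {N1 : Term G2 B}
        {N2 : Term [some B, some A, some .dia] B} {c w} :
        Evals K V N1 c w → EvalsRec K V N1 N2 .nil (c + K.krec) w
    | cons {G2 A B} {V : Env G2} {N1 : Term G2 B}
        {N2 : Term [some B, some A, some .dia] B} {vh vt ct c' wt w} :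
        EvalsRec K V N1 N2 vt ct wt →
        Evals K (.cons wt (.cons vh (.cons .dia .nil))) N2 c' w →
        EvalsRec K V N1 N2 (.cons vh vt) (ct + c' + K.kvar + K.krec) w

  /-- Iteration of the tree recursor over a tree value. -/
  inductive EvalsTree (K : CostModel) : {A B : Tp} → Term ([] : Ctx) B →
      Term [some B, some B, some A, some .dia] B → Value (.tree A) → ℕ → Value B → Prop
    | leaf {A B} {N1 : Term ([] : Ctx) B}
        {N2 : Term [some B, some B, some A, some .dia] B} {c w} :
        Evals K .nil N1 c w → EvalsTree K N1 N2 (.leaf (A := A)) (c + K.ktrec) w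
    | node {A B} {N1 : Term ([] : Ctx) B}
        {N2 : Term [some B, some B, some A, some .dia] B} {vx vl vr cl cr c' wl wr w} :
        EvalsTree K N1 N2 vl cl wl →
        EvalsTree K N1 N2 vr cr wr →
        Evals K (.cons wr (.cons wl (.cons vx (.cons .dia .nil)))) N2 c' w →
        EvalsTree K N1 N2 (.node vx vl vr) (cl + cr + c' + 2 * K.kvar + K.ktrec) w
end

mutual
  /-- The size of a value: the number of diamond values it contains.
  Closures have the size of their captured environment; list conses and tree
  nodes add `1` to the sizes of their components. -/
  def Value.size : {A : Tp} → Value A → ℕ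
    | _, .dia => 1
    | _, .null => 0
    | _, .record V _ _ => V.size
    | _, .inj1 v => v.size
    | _, .inj2 v => v.size
    | _, .pair v1 v2 => v1.size + v2.size
    | _, .clos V _ => V.size
    | _, .sempty => 0
    | _, .spush vh vt => vh.size + vt.size
    | _, .nil => 0
    | _, .cons vh vt => 1 + vh.size + vt.size
    | _, .leaf => 0
    | _, .node v vl vr => 1 + v.size + vl.size + vr.size

  /-- The size of an environment: the sum of the sizes of its values. -/
  def Env.size : {G : Ctx} → Env G → ℕ
    | _, .nil => 0
    | _, .cons v V => v.size + V.size
    | _, .skip V => V.size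
end

lemma size_lk : ∀ {G A} (V : Env G) (l : Lk G A), (V.lk l).size ≤ V.size := by
  intro G A V l
  induction l with
  | here => cases V with | cons v V => simp [Env.lk, Env.size]
  | @there o A G l ih =>
    cases V with
    | cons v V => have := ih V; simp [Env.lk, Env.size]; omega
    | skip V => have := ih V; simp [Env.lk, Env.size]; omega

lemma size_split : ∀ {G G1 G2} (s : Split G G1 G2) (V : Env G),
    (V.split1 s).size + (V.split2 s).size = V.size := by
  intro G G1 G2 s
  induction s with
  | nil => intro V; cases V; simp [Env.split1, Env.split2, Env.size]
  | skip s ih => intro V; cases V with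
    | skip V => have := ih V; simp [Env.split1, Env.split2, Env.size]; omega
  | left s ih => intro V; cases V with
    | cons v V => have := ih V; simp [Env.split1, Env.split2, Env.size]; omega
  | right s ih => intro V; cases V with
    | cons v V => have := ih V; simp [Env.split1, Env.split2, Env.size]; omega

lemma evals_size (K : CostModel) : ∀ {G A} (V : Env G) (M : Term G A) (c : ℕ)
    (v : Value A), Evals K V M c v → v.size ≤ V.size := by
  intro G A V M c v h
  refine Evals.rec (K := K)
    (motive_1 := fun {G A} (V : Env G) (_ : Term G A) _ v _ => v.size ≤ V.size)
    (motive_2 := fun {G2 A B} (V : Env G2) _ _ lv _ w _ => w.size ≤ V.size + lv.size)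
    (motive_3 := fun {A B} _ _ tv _ w _ => w.size ≤ tv.size)
    ?_ ?_ ?_ ?_ ?_ ?_ ?_ ?_ ?_ ?_ ?_ ?_ ?_ ?_ ?_ ?_ ?_ ?_ ?_ ?_ ?_ ?_ ?_ ?_ ?_ ?_ ?_ h
  · intro G A V l
    exact size_lk V l
  · intro G V
    simp [Value.size]
  · intro G A B V M c v h ih
    simpa [Value.size] using ih
  · intro G A B V M c v h ih
    simpa [Value.size] using ih
  · intro G G1 G2 A B C V s M N1 N2 c c' v w h1 h2 ih1 ih2
    have hs := size_split s V
    simp only [Value.size, Env.size] at ih1 ih2 ⊢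
    omega
  · intro G G1 G2 A B C V s M N1 N2 c c' v w h1 h2 ih1 ih2
    have hs := size_split s V
    simp only [Value.size, Env.size] at ih1 ih2 ⊢
    omega
  · intro G G1 G2 A B V s M1 M2 c1 c2 v1 v2 h1 h2 ih1 ih2
    have hs := size_split s V
    simp only [Value.size]
    omega
  · intro G G1 G2 A B C V s M N c c' v1 v2 w h1 h2 ih1 ih2
    have hs := size_split s V
    simp only [Value.size, Env.size] at ih1 ih2 ⊢
    omega
  · intro G A B V M
    simp [Value.size]
  · intro G G1 G2 G' A B V s M N W M' c1 c2 c3 v w h1 h2 h3 ih1 ih2 ih3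
    have hs := size_split s V
    simp only [Value.size, Env.size] at ih1 ih2 ih3 ⊢
    omega
  · intro G A V
    simp [Value.size]
  · intro G G1 G23 G2 G3 A V s1 s2 Md Mh Mt cd ch ct vh vt h1 h2 h3 ih1 ih2 ih3
    have hs1 := size_split s1 V
    have hs2 := size_split s2 (V.split2 s1)
    simp only [Value.size, Env.size] at ih1 ih2 ih3 ⊢
    omega
  · intro G G1 G2 A B V s M N1 N2 c cr lv w h1 h2 ih1 ih2
    have hs := size_split s V
    omega
  · intro G A B V M1 M2
    simp [Value.size]
  · intro G G' A B V M W M1 M2 c c' v h1 h2 ih1 ih2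
    simp only [Value.size] at ih1
    omega
  · intro G G' A B V M W M1 M2 c c' v h1 h2 ih1 ih2
    simp only [Value.size] at ih1
    omega
  · intro G A V
    simp [Value.size]
  · intro G G1 G2 A V s Mh Mt ch ct vh vt h1 h2 ih1 ih2
    have hs := size_split s V
    simp only [Value.size]
    omega
  · intro G G1 G2 A B V s M N1 N2 c c' w h1 h2 ih1 ih2
    have hs := size_split s V
    omega
  · intro G G1 G2 A B V s M N1 N2 c c' vh vt w h1 h2 ih1 ih2
    have hs := size_split s V
    simp only [Value.size, Env.size] at ih1 ih2 ⊢
    omega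
  · intro G A V
    simp [Value.size]
  · intro G G1 G234 G2 G34 G3 G4 A V s1 s2 s3 Md Mx Ml Mr cd cx cl cr vx vl vr h1 h2 h3 h4 ih1 ih2 ih3 ih4
    have hs1 := size_split s1 V
    have hs2 := size_split s2 (V.split2 s1)
    have hs3 := size_split s3 ((V.split2 s1).split2 s2)
    simp only [Value.size, Env.size] at ih1 ih2 ih3 ih4 ⊢
    omega
  · intro G A B V M N1 N2 c cr tv w h1 h2 ih1 ih2
    omega
  · intro G2 A B V N1 N2 c w h ih
    simp only [Value.size]
    omega
  · intro G2 A B V N1 N2 vh vt ct c' wt w h1 h2 ih1 ih2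
    simp only [Value.size, Env.size] at ih1 ih2 ⊢
    omega
  · intro A B N1 N2 c w h ih
    simp only [Value.size, Env.size] at ih ⊢
    omega
  · intro A B N1 N2 vx vl vr cl cr c' wl wr w h1 h2 h3 ih1 ih2 ih3
    simp only [Value.size, Env.size] at ih1 ih2 ih3 ⊢
    omega

/-- **There is no closed term of type `◆` in LFPL⁺**: no term `M` with
`⊢ M : ◆` under the empty context evaluates under the empty environment to a
value (such a value would be the diamond value of size `1`, contradicting that
the empty environment has size `0`). -/
theorem no_closed_diamond (K : CostModel) :
    ¬ ∃ (M : Term ([] : Ctx) .dia) (c : ℕ) (v : Value .dia),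
        Evals K .nil M c v := by
  rintro ⟨M, c, v, h⟩
  have hb := evals_size K .nil M c v h
  cases v
  simp [Value.size, Env.size] at hb
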